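/- Let δ be a submodular integer-valued predimension on finite subsets of M, nonnegative on all finite subsets, and let A ⊆ M with self-sufficient closure ⟨A⟩. If ā is a finite tuple from M such that δ(ā/A) < 0 but δ(ā′/A) ≥ 0 for every proper subtuple ā′ of ā, then every element of ā belongs to ⟨A⟩. -/
import Mathlib


/-- `A ⊆ M` is *self-sufficient* for `δ` if `δ(b̄/A) ≥ 0` for every finite tuple `b̄`, where
`δ(b̄/A) = inf {δ(b̄ ∪ A₀) - δ(A₀) : A₀ ⊆ A finite}`; an infimum is `≥ 0` iff every term is. -/
def SelfSufficient {M : Type*} [DecidableEq M] (δ : Finset M → ℤ) (A : Set M) : Prop :=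
  ∀ (B : Finset M) (A₀ : Finset M), ↑A₀ ⊆ A → 0 ≤ δ (B ∪ A₀) - δ A₀

/-- The self-sufficient closure `⟨A⟩`: the intersection of all self-sufficient supersets. -/
def sscl {M : Type*} [DecidableEq M] (δ : Finset M → ℤ) (A : Set M) : Set M :=
  ⋂₀ {C : Set M | A ⊆ C ∧ SelfSufficient δ C}

/-- if `δ(ā/A) < 0` (i.e. some term of the defining infimum is negative) but
`δ(ā′/A) ≥ 0` for every proper subtuple `ā′ ⊊ ā`, then every element of `ā` belongs to the
self-sufficient closure `⟨A⟩` of `A`. -/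
theorem mem_sscl_of_neg_predim {M : Type*} [DecidableEq M] (δ : Finset M → ℤ)
    (hsub : ∀ B C : Finset M, δ (B ∪ C) ≤ δ B + δ C - δ (B ∩ C))
    (hpos : ∀ B : Finset M, 0 ≤ δ B)
    (A : Set M) (a : Finset M)
    (hneg : ∃ A₀ : Finset M, ↑A₀ ⊆ A ∧ δ (a ∪ A₀) - δ A₀ < 0)
    (hmin : ∀ a' : Finset M, a' ⊂ a → ∀ A₀ : Finset M, ↑A₀ ⊆ A → 0 ≤ δ (a' ∪ A₀) - δ A₀) :
    ↑a ⊆ sscl δ A := by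
  classical
  obtain ⟨A₀, hA₀, hneg⟩ := hneg
  intro x hx
  intro C hC
  obtain ⟨hAC, hss⟩ := hC
  -- show the whole tuple a lies in C
  set a' : Finset M := a.filter (fun y => y ∈ C) with ha'
  have ha'sub : a' ⊆ a := Finset.filter_subset _ _
  by_cases hne : a' = a
  · have : (x : M) ∈ a' := hne ▸ hx
    exact (Finset.mem_filter.mp this).2
  · exfalso
    have hproper : a' ⊂ a := ssubset_of_subset_of_ne ha'sub hne
    -- self-sufficiency of C with B = a \ a', finite subset a' ∪ A₀ ⊆ C
    have hsubC : ↑(a' ∪ A₀) ⊆ C := by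
      intro y hy
      rcases Finset.mem_union.mp (by exact_mod_cast hy) with h | h
      · exact (Finset.mem_filter.mp h).2
      · exact hAC (hA₀ h)
    have h1 := hss (a \ a') (a' ∪ A₀) hsubC
    have hU : (a \ a') ∪ (a' ∪ A₀) = a ∪ A₀ := by
      rw [← Finset.union_assoc, Finset.sdiff_union_of_subset ha'sub]
    rw [hU] at h1
    have h2 := hmin a' hproper A₀ hA₀
    omega
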